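/- arXiv:1203.3280 — 3 statements merged into one kernel-verified Lean document; each statement's English description precedes it below -/
import Mathlib

section
/- Let X₄(n) = Σ_{j=1}^{n} 2^{f(j)} with f(j) the largest m ≥ 0 such that j > m(m+1)/2. Then X₄ satisfies the Frame–Stewart recurrence: for every t ≥ 1 and every n with t(t+1)/2 < n ≤ (t+1)(t+2)/2, X₄(n) = 2·X₄(n − (t+1)) + (2^{t+1} − 1). -/
/-- `hanoiF j` is the largest nonnegative integer `m` with `j > m(m+1)/2`. -/
def hanoiF (j : ℕ) : ℕ := Nat.findGreatest (fun m => m * (m + 1) / 2 < j) j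

/-- Frame–Stewart move count `X₄(n) = Σ_{j=1}^n 2^{f(j)}`. -/
def X4 (n : ℕ) : ℕ := ∑ j ∈ Finset.Icc 1 n, 2 ^ hanoiF j

/-!
On the block `t(t+1)/2 < j ≤ (t+1)(t+2)/2` of `t + 1` consecutive indices the summand `2 ^ f(j)`
is constantly `2 ^ t`, so `X₄` is affine on each block, and summing the blocks gives
`X₄(t(t+1)/2) + 2^t = t·2^t + 1`. Combining the two, `X₄(t(t+1)/2 + m) + 2^t = (t + m)·2^t + 1`
for `m ≤ t + 1`, and the recurrence is an identity between two instances of this closed form: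
removing `t + 1` indices moves `n` from block `t` to the same position in block `t - 1`.
-/

lemma triangle_succ (t : ℕ) : (t + 1) * (t + 2) / 2 = t * (t + 1) / 2 + (t + 1) := by
  have : (t + 1) * (t + 2) = t * (t + 1) + 2 * (t + 1) := by ring
  omega

lemma hanoiF_eq_of_lt_of_le {t j : ℕ} (h1 : t * (t + 1) / 2 < j)
    (h2 : j ≤ (t + 1) * (t + 2) / 2) : hanoiF j = t := by
  have ht : t ≤ t * (t + 1) / 2 := by
    have : 2 * t ≤ t * (t + 1) := by nlinarith [Nat.le_mul_self t]
    omega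
  refine Nat.findGreatest_eq_iff.mpr ⟨by omega, fun _ => h1, fun k hk _ hlt => ?_⟩
  have : (t + 1) * (t + 2) / 2 ≤ k * (k + 1) / 2 :=
    Nat.div_le_div_right (Nat.mul_le_mul (by omega) (by omega))
  omega

lemma X4_succ (n : ℕ) : X4 (n + 1) = X4 n + 2 ^ hanoiF (n + 1) :=
  Finset.sum_Icc_succ_top (by omega) _

lemma X4_triangle_add_of_le (t : ℕ) {m : ℕ} (hm : m ≤ t + 1) :
    X4 (t * (t + 1) / 2 + m) = X4 (t * (t + 1) / 2) + m * 2 ^ t := by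
  induction m with
  | zero => simp
  | succ m ih =>
    have hf : hanoiF (t * (t + 1) / 2 + m + 1) = t :=
      hanoiF_eq_of_lt_of_le (by omega) (by rw [triangle_succ]; omega)
    rw [← add_assoc, X4_succ, ih (by omega), hf]
    ring

lemma X4_triangle (t : ℕ) : X4 (t * (t + 1) / 2) + 2 ^ t = t * 2 ^ t + 1 := by
  induction t with
  | zero => simp [X4]
  | succ s ih =>
    rw [triangle_succ, X4_triangle_add_of_le s le_rfl]
    linear_combination ih

lemma X4_closed_form (t : ℕ) {m : ℕ} (hm : m ≤ t + 1) :
    X4 (t * (t + 1) / 2 + m) + 2 ^ t = (t + m) * 2 ^ t + 1 := by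
  rw [X4_triangle_add_of_le t hm]
  linear_combination X4_triangle t

/-- The Frame–Stewart recurrence: for every t ≥ 1 and n with
t(t+1)/2 < n ≤ (t+1)(t+2)/2, `X₄(n) = 2·X₄(n − (t+1)) + (2^{t+1} − 1)`. -/
theorem stmt_3 (t n : ℕ) (ht : 1 ≤ t)
    (h1 : t * (t + 1) / 2 < n) (h2 : n ≤ (t + 1) * (t + 2) / 2) :
    X4 n = 2 * X4 (n - (t + 1)) + (2 ^ (t + 1) - 1) := by
  obtain ⟨m, rfl, hm⟩ : ∃ m, n = t * (t + 1) / 2 + (m + 1) ∧ m ≤ t :=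
    ⟨n - t * (t + 1) / 2 - 1, by omega, by rw [triangle_succ] at h2; omega⟩
  obtain ⟨s, rfl⟩ : ∃ s, t = s + 1 := ⟨t - 1, by omega⟩
  have hs : (s + 1) * (s + 1 + 1) / 2 = s * (s + 1) / 2 + (s + 1) := triangle_succ s
  have hn := X4_closed_form (s + 1) (m := m + 1) (by omega)
  have hprev := X4_closed_form s hm
  rw [show (s + 1) * (s + 1 + 1) / 2 + (m + 1) - (s + 1 + 1) = s * (s + 1) / 2 + m by omega]
  zify [Nat.one_le_two_pow] at hn hprev ⊢
  linear_combination hn - 2 * hprev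
end

section
/- Define the Frame–Stewart numbers by FS(0) = 0 and FS(n) = min over 1 ≤ k < n+1 (with k disks moved using 3 pegs) of 2·FS(n−k) + 2^k − 1. Then FS(n) = Σ_{j=1}^{n} 2^{f(j)}, where f(j) is the largest m ≥ 0 with j > m(m+1)/2. -/
/-- The Frame–Stewart numbers: `FS 0 = 0` and
`FS n = min_{1 ≤ k ≤ n} (2·FS (n−k) + 2^k − 1)` (here indexed by `m = n − k`). -/
def FS : ℕ → ℕ
  | 0 => 0
  | n + 1 =>
    (Finset.range (n + 1)).attach.inf' (by simp)
      (fun m => 2 * FS m.1 + 2 ^ (n + 1 - m.1) - 1)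
decreasing_by exact Finset.mem_range.mp m.2

theorem isMinOn_Iic_of_succ_le_of_le_succ {α : Type*} [Preorder α] {g : ℕ → α} {a b : ℕ}
    (hdown : ∀ k < a, g (k + 1) ≤ g k) (hup : ∀ k, a ≤ k → k < b → g k ≤ g (k + 1)) :
    IsMinOn g (Set.Iic b) a := by
  intro m (hm : m ≤ b)
  rcases le_total m a with hma | ham
  · refine Nat.le_induction (P := fun k _ => k ≤ a → g k ≤ g m) (fun _ => le_rfl)
      (fun k _ ih hk => (hdown k hk).trans (ih (Nat.le_of_succ_le hk))) a hma le_rfl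
  · refine Nat.le_induction (P := fun k _ => k ≤ b → g a ≤ g k) (fun _ => le_rfl)
      (fun k hak ih hk => (ih (Nat.le_of_succ_le hk)).trans (hup k hak hk)) m ham hm

namespace FrameStewart

def tri (t : ℕ) : ℕ := t * (t + 1) / 2

theorem tri_succ (t : ℕ) : tri (t + 1) = tri t + (t + 1) := by
  rw [tri, tri, show (t + 1) * (t + 1 + 1) = t * (t + 1) + (t + 1) * 2 by ring,
    Nat.add_mul_div_right _ _ two_pos]

theorem tri_mono : Monotone tri :=
  monotone_nat_of_le_succ fun t => by rw [tri_succ]; omega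

theorem le_tri (t : ℕ) : t ≤ tri t := by
  induction t with
  | zero => exact le_rfl
  | succ t ih => rw [tri_succ]; omega

theorem hanoiF_eq_iff {j t : ℕ} (hj : 0 < j) : hanoiF j = t ↔ tri t < j ∧ j ≤ tri (t + 1) := by
  change Nat.findGreatest (fun m => tri m < j) j = t ↔ _
  rw [Nat.findGreatest_eq_iff]
  constructor
  · rintro ⟨-, hpos, hmax⟩
    refine ⟨?_, ?_⟩
    · rcases t.eq_zero_or_pos with rfl | ht
      exacts [hj, hpos ht.ne']
    · by_contra! h
      by_cases ht : t + 1 ≤ j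
      · exact hmax t.lt_succ_self ht h
      · have := le_tri (t + 1)
        omega
  · rintro ⟨hlt, hle⟩
    refine ⟨(le_tri t).trans hlt.le, fun _ => hlt, fun k hk _ hkj => ?_⟩
    have := tri_mono (show t + 1 ≤ k from hk)
    omega

theorem tri_hanoiF_lt {j : ℕ} (hj : 0 < j) : tri (hanoiF j) < j :=
  ((hanoiF_eq_iff hj).1 rfl).1

theorem le_tri_hanoiF_succ {j : ℕ} (hj : 0 < j) : j ≤ tri (hanoiF j + 1) :=
  ((hanoiF_eq_iff hj).1 rfl).2

theorem le_hanoiF_of_tri_lt {j t : ℕ} (h : tri t < j) : t ≤ hanoiF j :=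
  Nat.le_findGreatest ((le_tri t).trans h.le) h

theorem hanoiF_mono : Monotone hanoiF :=
  fun _ _ h => Nat.findGreatest_mono (fun _ hm => hm.trans_le h) h

theorem hanoiF_succ_le (n : ℕ) : hanoiF (n + 1) ≤ n := by
  have := tri_hanoiF_lt (j := n + 1) (by omega)
  have := le_tri (hanoiF (n + 1))
  omega

theorem hanoiF_succ_le_hanoiF_sub (n : ℕ) :
    hanoiF (n + 1) ≤ hanoiF (n + 1 - hanoiF (n + 1)) + 1 := by
  set f := hanoiF (n + 1)
  rcases Nat.eq_zero_or_pos f with hf | hf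
  · omega
  obtain ⟨s, hs⟩ : ∃ s, f = s + 1 := ⟨f - 1, by omega⟩
  have htri : tri f < n + 1 := tri_hanoiF_lt (by omega)
  rw [hs, tri_succ] at htri
  have := le_hanoiF_of_tri_lt (t := s) (j := n + 1 - f) (by omega)
  omega

def closedFS (n : ℕ) : ℕ := ∑ j ∈ Finset.Icc 1 n, 2 ^ hanoiF j

theorem closedFS_succ (n : ℕ) : closedFS (n + 1) = closedFS n + 2 ^ hanoiF (n + 1) :=
  Finset.sum_Icc_succ_top (by omega) _

theorem closedFS_succ_add_one (n : ℕ) :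
    closedFS (n + 1) + 1 = 2 * closedFS (n - hanoiF (n + 1)) + 2 ^ (hanoiF (n + 1) + 1) := by
  induction n with
  | zero => decide
  | succ n ih =>
    obtain ⟨f, hf⟩ : ∃ f, hanoiF (n + 1) = f := ⟨_, rfl⟩
    rw [hf] at ih
    have hlt : tri f < n + 1 := hf ▸ tri_hanoiF_lt (by omega)
    have hle : n + 1 ≤ tri (f + 1) := hf ▸ le_tri_hanoiF_succ (by omega)
    rw [closedFS_succ (n + 1)]
    rcases hle.eq_or_lt with hblock | hinner
    -- `n + 1` closes the block of `f`, so the optimal number of parked disks stays `n - f`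
    · have hf' : hanoiF (n + 1 + 1) = f + 1 :=
        (hanoiF_eq_iff (by omega)).2 ⟨by omega, by rw [tri_succ (f + 1)]; omega⟩
      rw [hf', show n + 1 - (f + 1) = n - f by omega, pow_succ 2 (f + 1)]
      omega
    -- inside a block one more disk is parked, and it lies in the block of `f - 1`
    · obtain _ | s := f
      · exact absurd hinner (by simp [tri])
      have h1 := tri_succ s
      have h2 := tri_succ (s + 1)
      have hf' : hanoiF (n + 1 + 1) = s + 1 := (hanoiF_eq_iff (by omega)).2 ⟨by omega, by omega⟩
      have hs : hanoiF (n - (s + 1) + 1) = s :=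
        (hanoiF_eq_iff (by omega)).2 ⟨by omega, by omega⟩
      rw [hf', show n + 1 - (s + 1) = n - (s + 1) + 1 by omega, closedFS_succ (n - (s + 1)), hs,
        pow_succ 2 (s + 1), pow_succ 2 s]
      omega

theorem closedFS_succ_add_one_le {n m : ℕ} (hm : m ≤ n) :
    closedFS (n + 1) + 1 ≤ 2 * closedFS m + 2 ^ (n + 1 - m) := by
  set cost : ℕ → ℕ := fun k => 2 * closedFS k + 2 ^ (n + 1 - k)
  have hstep : ∀ k ≤ n, cost k + 2 ^ (hanoiF (k + 1) + 1) = cost (k + 1) + 2 ^ (n - k) := by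
    intro k hk
    simp only [cost, closedFS_succ, show n + 1 - k = n - k + 1 by omega,
      show n + 1 - (k + 1) = n - k by omega, pow_succ]
    ring
  have hsub := hanoiF_succ_le_hanoiF_sub n
  set f := hanoiF (n + 1)
  have hf : f ≤ n := hanoiF_succ_le n
  have hopt : closedFS (n + 1) + 1 = cost (n - f) := by
    simp only [cost, show n + 1 - (n - f) = f + 1 by omega]
    exact closedFS_succ_add_one n
  rw [hopt]
  refine isMinOn_Iic_of_succ_le_of_le_succ (g := cost) ?_ ?_ (Set.mem_Iic.2 hm)
  · intro k hk
    have : 2 ^ (hanoiF (k + 1) + 1) ≤ 2 ^ (n - k) :=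
      Nat.pow_le_pow_right two_pos (by have := hanoiF_mono (show k + 1 ≤ n + 1 by omega); omega)
    have := hstep k (by omega)
    omega
  · intro k hk hkn
    have : 2 ^ (n - k) ≤ 2 ^ (hanoiF (k + 1) + 1) := by
      refine Nat.pow_le_pow_right two_pos ?_
      have := hanoiF_mono (show n + 1 - f ≤ k + 1 by omega)
      omega
    have := hstep k (by omega)
    omega

theorem closedFS_succ_eq_inf' (n : ℕ) :
    closedFS (n + 1) = (Finset.range (n + 1)).attach.inf' (by simp)
      (fun m => 2 * closedFS m.1 + 2 ^ (n + 1 - m.1) - 1) := by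
  have hf : hanoiF (n + 1) ≤ n := hanoiF_succ_le n
  refine le_antisymm (Finset.le_inf' _ _ fun ⟨m, hm⟩ _ => ?_) ?_
  · show closedFS (n + 1) ≤ 2 * closedFS m + 2 ^ (n + 1 - m) - 1
    have := closedFS_succ_add_one_le (Finset.mem_range_succ_iff.mp hm)
    omega
  · refine (Finset.inf'_le _ (Finset.mem_attach _
      ⟨n - hanoiF (n + 1), Finset.mem_range_succ_iff.mpr (Nat.sub_le _ _)⟩)).trans_eq ?_
    have := closedFS_succ_add_one n
    simp only [show n + 1 - (n - hanoiF (n + 1)) = hanoiF (n + 1) + 1 by omega]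
    omega

end FrameStewart

/-- Klavžar–Milutinović closed form: `FS n = Σ_{j=1}^n 2^{f(j)}`. -/
theorem stmt_4 (n : ℕ) : FS n = ∑ j ∈ Finset.Icc 1 n, 2 ^ hanoiF j := by
  induction n using Nat.strong_induction_on with
  | _ n ih =>
    cases n with
    | zero => simp [FS]
    | succ n =>
      change _ = FrameStewart.closedFS (n + 1)
      rw [FS, FrameStewart.closedFS_succ_eq_inf']
      exact Finset.inf'_congr _ rfl fun m _ => by rw [ih m.1 (Finset.mem_range.mp m.2)]; rfl
end

section
/- For all n ≥ 1, X₄(n) ≤ 2^n − 1, i.e., the Frame–Stewart 4-peg move count never exceeds the 3-peg optimal count, with strict inequality for n ≥ 3. -/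
open Finset

lemma hanoiF_lt_self {j : ℕ} (hj : 0 < j) : hanoiF j < j := by
  refine (Nat.findGreatest_le j).lt_of_ne fun h => ?_
  have hlt : j * (j + 1) / 2 < j :=
    Nat.findGreatest_of_ne_zero (P := fun m => m * (m + 1) / 2 < j) h hj.ne'
  have hle : j ≤ j * (j + 1) / 2 :=
    (Nat.le_div_iff_mul_le two_pos).2 (Nat.mul_le_mul_left j (Nat.succ_le_succ hj))
  exact hle.not_gt hlt

lemma two_pow_hanoiF_le {j : ℕ} (hj : 0 < j) : 2 ^ hanoiF j ≤ 2 ^ (j - 1) :=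
  Nat.pow_le_pow_right two_pos (Nat.le_sub_one_of_lt (hanoiF_lt_self hj))

lemma sum_Icc_two_pow_sub_one (n : ℕ) : ∑ j ∈ Icc 1 n, 2 ^ (j - 1) = 2 ^ n - 1 := by
  rw [← Ico_add_one_right_eq_Icc, sum_Ico_eq_sum_range]
  simpa using Nat.geomSum_eq le_rfl n

theorem stmt_10_general (n : ℕ) :
    X4 n ≤ 2 ^ n - 1 ∧ (3 ≤ n → X4 n < 2 ^ n - 1) := by
  have hle : ∀ j ∈ Icc 1 n, 2 ^ hanoiF j ≤ 2 ^ (j - 1) := fun j hj =>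
    two_pow_hanoiF_le (mem_Icc.1 hj).1
  rw [X4, ← sum_Icc_two_pow_sub_one]
  exact ⟨sum_le_sum hle, fun h3 => sum_lt_sum hle ⟨3, mem_Icc.2 ⟨by norm_num, h3⟩, by decide⟩⟩

/-- The 4-peg Frame–Stewart count never exceeds the 3-peg optimal count `2^n − 1`,
with strict inequality for `n ≥ 3`. -/
theorem stmt_10 (n : ℕ) (hn : 1 ≤ n) :
    X4 n ≤ 2 ^ n - 1 ∧ (3 ≤ n → X4 n < 2 ^ n - 1) :=
  stmt_10_general n
end
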